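/- (Theorem 2, abstract form) Let r, d, k be positive integers with r dividing k and k ≤ d, and let W_1, …, W_k be subspaces of V with dim W_i = d for every i. Assume: (L2) for every i and every S ⊆ {1,…,k}\{i} with |S| ≤ r−1, I(W_i ; W_S) = 0; (L3) for every i and all disjoint subsets B_1, B_2 ⊆ {1,…,k}\{i}, I(W_i ; W_{B_1} | W_{B_2}) = I(W_i ; W_{B_1}); (L4) for every i and every S ⊆ {1,…,k}\{i} with |S| = r, I(W_i ; W_S) ≤ r. Then 2 · dim(Σ_{i=1}^k W_i) ≥ k(2d − k + r). -/

import Mathlib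

/-- Mutual information of two subspaces: `I(A;B) = dim A + dim B − dim(A+B)`. -/
noncomputable def mi (F : Type*) {V : Type*} [Field F] [AddCommGroup V] [Module F V]
    (A B : Submodule F V) : ℤ :=
  (Module.finrank F A : ℤ) + Module.finrank F B - Module.finrank F (A ⊔ B : Submodule F V)

/-- Conditional mutual information of subspaces:
`I(A;B|C) = dim(A+C) + dim(B+C) − dim(A+B+C) − dim C`. -/
noncomputable def cmi (F : Type*) {V : Type*} [Field F] [AddCommGroup V] [Module F V]
    (A B C : Submodule F V) : ℤ :=
  (Module.finrank F (A ⊔ C : Submodule F V) : ℤ) + Module.finrank F (B ⊔ C : Submodule F V)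
    - Module.finrank F (A ⊔ B ⊔ C : Submodule F V) - Module.finrank F C

/-!
Add the subspaces `W_i` one at a time: each step raises the dimension by
`d - I(W_i ; W_S)`, where `S` is the set of subspaces already added. By the chain rule,
(L3) makes `I(W_i ; ·)` additive over disjoint index sets, so splitting `S` into `⌊|S|/r⌋`
blocks of size `r` and a remainder of size `< r`, (L4) and (L2) give
`I(W_i ; W_S) ≤ r ⌊|S|/r⌋`. Summing over `|S| = 0, …, k-1` with `r ∣ k` yields the bound.
-/

open Finset

theorem Nat.two_mul_sum_range_mul_div_add_mul_self {r k : ℕ} (h : r ∣ k) :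
    2 * ∑ j ∈ range k, r * (j / r) + k * r = k * k := by
  obtain ⟨m, rfl⟩ := h
  induction m with
  | zero => simp
  | succ m ih =>
    have hlast : ∀ x ∈ range r, r * ((r * m + x) / r) = r * m := by
      intro x hx
      rcases Nat.eq_zero_or_pos r with hr | hr
      · simp [hr]
      · rw [Nat.mul_add_div hr, Nat.div_eq_of_lt (mem_range.mp hx), add_zero]
    rw [mul_add_one, sum_range_add, sum_congr rfl hlast, sum_const, card_range, smul_eq_mul]
    linear_combination ih

section MutualInformation

variable {F V : Type*} [Field F] [AddCommGroup V] [Module F V]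

theorem finrank_sup_eq_sub_mi (A B : Submodule F V) :
    (Module.finrank F (A ⊔ B : Submodule F V) : ℤ)
      = Module.finrank F A + Module.finrank F B - mi F A B := by
  rw [mi]; ring

theorem mi_sup_eq_mi_add_cmi (A B C : Submodule F V) :
    mi F A (B ⊔ C) = mi F A C + cmi F A B C := by
  rw [mi, mi, cmi, ← sup_assoc]; ring

theorem mi_sup_eq_add_of_cmi_eq {A B C : Submodule F V} (h : cmi F A B C = mi F A B) :
    mi F A (B ⊔ C) = mi F A B + mi F A C := by
  rw [mi_sup_eq_mi_add_cmi, h, add_comm]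

variable {ι : Type*} [DecidableEq ι] (W : ι → Submodule F V)

theorem mi_finset_sup_le_mul_card_div {r : ℕ} (hr : 0 < r)
    (hsmall : ∀ (i : ι) (S : Finset ι), i ∉ S → #S < r → mi F (W i) (S.sup W) = 0)
    (hcond : ∀ (i : ι) (B₁ B₂ : Finset ι), i ∉ B₁ → i ∉ B₂ → Disjoint B₁ B₂ →
      cmi F (W i) (B₁.sup W) (B₂.sup W) = mi F (W i) (B₁.sup W))
    (hblock : ∀ (i : ι) (S : Finset ι), i ∉ S → #S = r → mi F (W i) (S.sup W) ≤ r)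
    (i : ι) (S : Finset ι) (hi : i ∉ S) :
    mi F (W i) (S.sup W) ≤ r * (#S / r : ℕ) := by
  induction S using Finset.strongInduction with
  | H S ih =>
    by_cases hS : #S < r
    · rw [hsmall i S hi hS]; positivity
    rw [not_lt] at hS
    obtain ⟨T, hTS, hT⟩ := exists_subset_card_eq hS
    have hiT : i ∉ T := fun h ↦ hi (hTS h)
    have hirest : i ∉ S \ T := fun h ↦ hi (mem_sdiff.mp h).1
    have hsplit : mi F (W i) (S.sup W) = mi F (W i) (T.sup W) + mi F (W i) ((S \ T).sup W) := by
      rw [← union_sdiff_of_subset hTS, sup_union, union_sdiff_of_subset hTS]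
      exact mi_sup_eq_add_of_cmi_eq (hcond i T (S \ T) hiT hirest disjoint_sdiff)
    have hrest := ih (S \ T) (sdiff_ssubset hTS (card_pos.mp (hT ▸ hr))) hirest
    rw [card_sdiff_of_subset hTS, hT] at hrest
    rw [hsplit, Nat.div_eq_sub_div hr hS, Nat.cast_add, Nat.cast_one]
    linarith [hblock i T hiT hT]

theorem sum_range_card_sub_le_finrank_finset_sup {d : ℕ} {g : ℕ → ℤ}
    (hdim : ∀ i, Module.finrank F (W i) = d)
    (hmi : ∀ (i : ι) (S : Finset ι), i ∉ S → mi F (W i) (S.sup W) ≤ g #S)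
    (S : Finset ι) :
    ∑ j ∈ range #S, ((d : ℤ) - g j) ≤ Module.finrank F (S.sup W : Submodule F V) := by
  induction S using Finset.induction_on with
  | empty => simp
  | insert i S hi ih =>
    rw [card_insert_of_notMem hi, sum_range_succ, sup_insert, finrank_sup_eq_sub_mi, hdim]
    linarith [hmi i S hi]

end MutualInformation

theorem theorem2_mbr_reconstruction_bound_general
    (F V : Type*) [Field F] [AddCommGroup V] [Module F V]
    (r d k : ℕ) (hr : 0 < r)
    (hrk : r ∣ k)
    (W : Fin k → Submodule F V)
    (hdim : ∀ i : Fin k, Module.finrank F (W i) = d)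
    (hL2 : ∀ (i : Fin k) (S : Finset (Fin k)), i ∉ S → S.card ≤ r - 1 →
      mi F (W i) (S.sup W) = 0)
    (hL3 : ∀ (i : Fin k) (B₁ B₂ : Finset (Fin k)), i ∉ B₁ → i ∉ B₂ → Disjoint B₁ B₂ →
      cmi F (W i) (B₁.sup W) (B₂.sup W) = mi F (W i) (B₁.sup W))
    (hL4 : ∀ (i : Fin k) (S : Finset (Fin k)), i ∉ S → S.card = r →
      mi F (W i) (S.sup W) ≤ (r : ℤ)) :
    2 * (Module.finrank F ((Finset.univ : Finset (Fin k)).sup W : Submodule F V) : ℤ)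
      ≥ (k : ℤ) * (2 * d - k + r) := by
  have hmi := mi_finset_sup_le_mul_card_div W hr (fun i S hi hS ↦ hL2 i S hi (by omega)) hL3 hL4
  have hdim_sum :=
    sum_range_card_sub_le_finrank_finset_sup W (g := fun n ↦ r * (n / r : ℕ)) hdim hmi univ
  rw [card_univ, Fintype.card_fin, sum_sub_distrib, sum_const, card_range, nsmul_eq_mul] at hdim_sum
  have hfloor := congrArg (Nat.cast : ℕ → ℤ) (Nat.two_mul_sum_range_mul_div_add_mul_self hrk)
  simp only [Nat.cast_add, Nat.cast_mul, Nat.cast_sum, Nat.cast_ofNat] at hfloor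
  linarith

/-- Theorem 2, abstract form: Under properties (L2), (L3), (L4)
for `k` node subspaces each of dimension `d` (with `r ∣ k`, `k ≤ d`),
`2 · dim(Σ_{i=1}^k W_i) ≥ k(2d − k + r)`. -/
theorem theorem2_mbr_reconstruction_bound
    (F V : Type*) [Field F] [AddCommGroup V] [Module F V] [FiniteDimensional F V]
    (r d k : ℕ) (hr : 0 < r) (hd : 0 < d) (hk : 0 < k)
    (hrk : r ∣ k) (hkd : k ≤ d)
    (W : Fin k → Submodule F V)
    (hdim : ∀ i : Fin k, Module.finrank F (W i) = d)
    (hL2 : ∀ (i : Fin k) (S : Finset (Fin k)), i ∉ S → S.card ≤ r - 1 →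
      mi F (W i) (S.sup W) = 0)
    (hL3 : ∀ (i : Fin k) (B₁ B₂ : Finset (Fin k)), i ∉ B₁ → i ∉ B₂ → Disjoint B₁ B₂ →
      cmi F (W i) (B₁.sup W) (B₂.sup W) = mi F (W i) (B₁.sup W))
    (hL4 : ∀ (i : Fin k) (S : Finset (Fin k)), i ∉ S → S.card = r →
      mi F (W i) (S.sup W) ≤ (r : ℤ)) :
    2 * (Module.finrank F ((Finset.univ : Finset (Fin k)).sup W : Submodule F V) : ℤ)
      ≥ (k : ℤ) * (2 * d - k + r) :=
  theorem2_mbr_reconstruction_bound_general F V r d k hr hrk W hdim hL2 hL3 hL4
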